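/- Let V be a finite-dimensional real inner product space, p ≥ 1, let φ be an alternating p-form on V of comass at most one, and let u ∈ V be a unit vector. Define the alternating p-form φ_u = φ − u♭ ∧ (u ⌟ φ), i.e. φ_u(v_1,…,v_p) = φ(v_1,…,v_p) − Σ_{i=1}^p (−1)^{i−1} ⟨u, v_i⟩ φ(u, v_1,…,v_{i−1}, v_{i+1},…,v_p). Then φ_u(e_1,…,e_p) ≥ 0 for every φ-plane (e_1,…,e_p), and there exists a φ-plane (e_1,…,e_p) with φ_u(e_1,…,e_p) = 0 if and only if there exists a φ-plane (e_1,…,e_p) with u ∈ span{e_1,…,e_p}. (That is, the restricted form φ_u = u ⌟ (u ∧ φ) lies on the boundary of the cone Λ⁺(φ) of forms nonnegative on G(φ) exactly when u lies in the span of some φ-plane.) -/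

import Mathlib

/-!
Since `φ` has comass at most one, a `φ`-plane `e` maximises `φ` among orthonormal frames, so
the first variation of `φ` at `e` vanishes: replacing `e i` by a vector orthogonal to the plane
gives `0`. Hence `x ↦ φ (update e i x)` is the functional `⟪e i, ·⟫`, and after reordering
arguments `φ (u, e₁, …, ê_i, …, e_p) = (-1)^i ⟪e i, u⟫`. The sum defining `φ_u(e)` therefore
collapses to `∑ ⟪e i, u⟫² = ‖P u‖²`, with `P` the orthogonal projection onto the span of `e`, so
`φ_u(e) = 1 - ‖P u‖² ≥ 0`, with equality exactly when `u` lies in that span.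
-/

open scoped RealInnerProductSpace

open Submodule Set Function

instance Submodule.finite_span_range {R M ι : Type*} [Semiring R] [AddCommMonoid M] [Module R M]
    [Finite ι] (v : ι → M) : Module.Finite R (span R (range v)) :=
  Module.Finite.span_of_finite R (finite_range v)

section InnerProductSpace

variable {V ι : Type*} [NormedAddCommGroup V] [InnerProductSpace ℝ V]

theorem Orthonormal.update_of_inner_eq_zero [DecidableEq ι] {e : ι → V} (he : Orthonormal ℝ e)
    {i : ι} {v : V} (hv : ‖v‖ = 1) (hve : ∀ j ≠ i, ⟪e j, v⟫ = 0) :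
    Orthonormal ℝ (update e i v) := by
  refine ⟨fun j ↦ ?_, fun j k hjk ↦ ?_⟩
  · rcases eq_or_ne j i with rfl | hj
    · simpa using hv
    · simpa [hj] using he.1 j
  · rcases eq_or_ne j i with rfl | hj
    · simpa [hjk.symm, real_inner_comm] using hve k hjk.symm
    rcases eq_or_ne k i with rfl | hk
    · simpa [hj] using hve j hj
    · simpa [hj, hk] using he.2 hjk

theorem Orthonormal.norm_starProjection_span_sq [Fintype ι] {e : ι → V} (he : Orthonormal ℝ e)
    (x : V) : ‖(span ℝ (range e)).starProjection x‖ ^ 2 = ∑ i, ⟪e i, x⟫ ^ 2 := by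
  let b : OrthonormalBasis ι ℝ (span ℝ (range e)) :=
    OrthonormalBasis.mk (orthonormal_span he) ((span_range_subtype_eq_top_iff _ _).mpr rfl).ge
  rw [starProjection_apply, norm_coe, ← b.sum_sq_norm_inner_right]
  simp [b]

namespace AlternatingMap

def ComassLeOne (φ : V [⋀^ι]→ₗ[ℝ] ℝ) : Prop :=
  ∀ e : ι → V, Orthonormal ℝ e → φ e ≤ 1

section Update

variable [DecidableEq ι] {φ : V [⋀^ι]→ₗ[ℝ] ℝ} {e : ι → V}

theorem apply_update_le_norm (hφ : φ.ComassLeOne) (he : Orthonormal ℝ e) {i : ι} {v : V}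
    (hve : ∀ j ≠ i, ⟪e j, v⟫ = 0) : φ (update e i v) ≤ ‖v‖ := by
  rcases eq_or_ne v 0 with rfl | hv
  · simp
  have hunit : Orthonormal ℝ (update e i (‖v‖⁻¹ • v)) :=
    he.update_of_inner_eq_zero (norm_smul_inv_norm hv) fun j hj ↦ by
      rw [real_inner_smul_right, hve j hj, mul_zero]
  calc φ (update e i v) = ‖v‖ * φ (update e i (‖v‖⁻¹ • v)) := by
        rw [φ.map_update_smul, smul_eq_mul, mul_inv_cancel_left₀ (norm_ne_zero_iff.mpr hv)]
    _ ≤ ‖v‖ * 1 := mul_le_mul_of_nonneg_left (hφ _ hunit) (norm_nonneg v)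
    _ = ‖v‖ := mul_one _

/-- Tilting `e i` towards `w` to `v = ‖w‖² e i + B w`, where `B = φ (update e i w)`, gives
`φ (update e i v) = ‖w‖² + B²`, which exceeds `‖v‖ = ‖w‖ √(‖w‖² + B²)` unless `B = 0`. -/
theorem apply_update_eq_zero_of_inner_eq_zero (hφ : φ.ComassLeOne) (he : Orthonormal ℝ e)
    (hφe : φ e = 1) {w : V} (hw : ∀ j, ⟪e j, w⟫ = 0) (i : ι) : φ (update e i w) = 0 := by
  set B := φ (update e i w)
  set v := ‖w‖ ^ 2 • e i + B • w
  have hφv : φ (update e i v) = ‖w‖ ^ 2 + B ^ 2 := by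
    simp only [v, φ.map_update_add, φ.map_update_smul, update_eq_self, hφe, smul_eq_mul, B]
    ring
  have hv_norm : ‖v‖ ^ 2 = ‖w‖ ^ 2 * (‖w‖ ^ 2 + B ^ 2) := by
    have horth : ⟪‖w‖ ^ 2 • e i, B • w⟫ = 0 := by
      rw [real_inner_smul_left, real_inner_smul_right, hw i, mul_zero, mul_zero]
    rw [sq, norm_add_sq_eq_norm_sq_add_norm_sq_real horth, norm_smul, norm_smul, he.1 i,
      Real.norm_eq_abs, Real.norm_eq_abs, abs_of_nonneg (by positivity)]
    linear_combination ‖w‖ ^ 2 * sq_abs B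
  have hle : φ (update e i v) ≤ ‖v‖ := apply_update_le_norm hφ he fun j hj ↦ by
    rw [inner_add_right, real_inner_smul_right, real_inner_smul_right, he.inner_eq_zero hj, hw j]
    ring
  by_contra hB
  have : 0 < B ^ 2 := by positivity
  nlinarith [norm_nonneg v, sq_nonneg ‖w‖]

theorem apply_update_eq_inner [Finite ι] (hφ : φ.ComassLeOne) (he : Orthonormal ℝ e)
    (hφe : φ e = 1) (i : ι) (x : V) : φ (update e i x) = ⟪e i, x⟫ := by
  set K := span ℝ (range e)
  have hK : EqOn (φ.toMultilinearMap.toLinearMap e i) (innerₛₗ ℝ (e i)) K := by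
    refine LinearMap.eqOn_span' ?_
    rintro _ ⟨j, rfl⟩
    rcases eq_or_ne j i with rfl | hj
    · simp [hφe, he.1 j]
    · simp only [MultilinearMap.toLinearMap_apply, innerₛₗ_apply_apply, he.inner_eq_zero hj.symm]
      exact φ.map_eq_zero_of_eq _ (i := i) (j := j) (by simp [hj]) hj.symm
  have he_perp (j : ι) : ⟪e j, x - K.starProjection x⟫ = 0 :=
    inner_right_of_mem_orthogonal (subset_span (mem_range_self j))
      (sub_starProjection_mem_orthogonal x)
  calc φ (update e i x)
      = φ (update e i (K.starProjection x)) + φ (update e i (x - K.starProjection x)) := by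
        rw [← φ.map_update_add, add_sub_cancel]
    _ = ⟪e i, K.starProjection x⟫ + ⟪e i, x - K.starProjection x⟫ := by
        rw [apply_update_eq_zero_of_inner_eq_zero hφ he hφe he_perp, he_perp]
        exact congrArg (· + 0) (hK (starProjection_apply_mem K x))
    _ = ⟪e i, x⟫ := by rw [← inner_add_right, add_sub_cancel]

end Update

section FinTuple

variable {q : ℕ} {φ : V [⋀^Fin (q + 1)]→ₗ[ℝ] ℝ} {e : Fin (q + 1) → V}

theorem apply_cons_removeNth (hφ : φ.ComassLeOne) (he : Orthonormal ℝ e) (hφe : φ e = 1)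
    (i : Fin (q + 1)) (x : V) : φ (Fin.cons x (i.removeNth e)) = (-1) ^ (i : ℕ) * ⟪e i, x⟫ := by
  change φ (Matrix.vecCons x (i.removeNth e)) = _
  rw [← φ.neg_one_pow_smul_map_insertNth i, Fin.insertNth_removeNth,
    apply_update_eq_inner hφ he hφe, zsmul_eq_mul]
  push_cast
  rfl

theorem sum_neg_one_pow_mul_inner_mul_apply_cons (hφ : φ.ComassLeOne) (he : Orthonormal ℝ e)
    (hφe : φ e = 1) (u : V) :
    ∑ i : Fin (q + 1), (-1 : ℝ) ^ (i : ℕ) * ⟪u, e i⟫ * φ (Fin.cons u (i.removeNth e)) =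
      ‖(span ℝ (range e)).starProjection u‖ ^ 2 := by
  rw [he.norm_starProjection_span_sq]
  refine Finset.sum_congr rfl fun i _ ↦ ?_
  rw [apply_cons_removeNth hφ he hφe, real_inner_comm, mul_mul_mul_comm, ← pow_add,
    Even.neg_one_pow ⟨_, rfl⟩, one_mul, sq]

end FinTuple

end AlternatingMap

end InnerProductSpace

theorem restricted_form_boundary_iff_general
    {V : Type*} [NormedAddCommGroup V] [InnerProductSpace ℝ V]
    {q : ℕ}
    (φ : V [⋀^Fin (q + 1)]→ₗ[ℝ] ℝ)
    (hcomass : ∀ e : Fin (q + 1) → V, Orthonormal ℝ e → φ e ≤ 1)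
    (u : V) (hu : ‖u‖ = 1)
    (φu : (Fin (q + 1) → V) → ℝ)
    (hφu : ∀ v : Fin (q + 1) → V, φu v =
      φ v - ∑ i : Fin (q + 1), (-1 : ℝ) ^ (i : ℕ) * ⟪u, v i⟫ *
        φ (Fin.cons u (Fin.removeNth i v))) :
    (∀ e : Fin (q + 1) → V, Orthonormal ℝ e → φ e = 1 → 0 ≤ φu e) ∧
    ((∃ e : Fin (q + 1) → V, Orthonormal ℝ e ∧ φ e = 1 ∧ φu e = 0) ↔
      ∃ e : Fin (q + 1) → V, Orthonormal ℝ e ∧ φ e = 1 ∧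
        u ∈ Submodule.span ℝ (Set.range e)) := by
  have hφu_plane (e : Fin (q + 1) → V) (he : Orthonormal ℝ e) (hφe : φ e = 1) :
      φu e = 1 - ‖(span ℝ (range e)).starProjection u‖ ^ 2 := by
    rw [hφu, hφe, AlternatingMap.sum_neg_one_pow_mul_inner_mul_apply_cons hcomass he hφe]
  have hproj_le (e : Fin (q + 1) → V) : ‖(span ℝ (range e)).starProjection u‖ ≤ 1 :=
    hu ▸ norm_starProjection_apply_le _ u
  refine ⟨fun e he hφe ↦ ?_, exists_congr fun e ↦ and_congr_right fun he ↦
    and_congr_right fun hφe ↦ ?_⟩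
  · rw [hφu_plane e he hφe, sub_nonneg]
    exact pow_le_one₀ (norm_nonneg _) (hproj_le e)
  · rw [hφu_plane e he hφe, sub_eq_zero, eq_comm, pow_eq_one_iff_of_nonneg (norm_nonneg _)
      two_ne_zero, mem_iff_norm_starProjection, hu]

/-- **Corollary 5.17** (Harvey–Lawson).  For a unit vector `u`, the form
`φ_u = φ − u♭ ∧ (u ⌟ φ)` (the restriction of `φ` to the hyperplane `u⊥`) is nonnegative on
all `φ`-planes, and it vanishes on some `φ`-plane iff `u` lies in the span of some `φ`-plane
(i.e. `φ_u` lies on the boundary of the cone `Λ⁺(φ)`). -/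
theorem restricted_form_boundary_iff
    {V : Type*} [NormedAddCommGroup V] [InnerProductSpace ℝ V]
    [FiniteDimensional ℝ V] {q : ℕ}
    (φ : V [⋀^Fin (q + 1)]→ₗ[ℝ] ℝ)
    (hcomass : ∀ e : Fin (q + 1) → V, Orthonormal ℝ e → φ e ≤ 1)
    (u : V) (hu : ‖u‖ = 1)
    (φu : (Fin (q + 1) → V) → ℝ)
    (hφu : ∀ v : Fin (q + 1) → V, φu v =
      φ v - ∑ i : Fin (q + 1), (-1 : ℝ) ^ (i : ℕ) * ⟪u, v i⟫ *
        φ (Fin.cons u (Fin.removeNth i v))) :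
    (∀ e : Fin (q + 1) → V, Orthonormal ℝ e → φ e = 1 → 0 ≤ φu e) ∧
    ((∃ e : Fin (q + 1) → V, Orthonormal ℝ e ∧ φ e = 1 ∧ φu e = 0) ↔
      ∃ e : Fin (q + 1) → V, Orthonormal ℝ e ∧ φ e = 1 ∧
        u ∈ Submodule.span ℝ (Set.range e)) :=
  restricted_form_boundary_iff_general φ hcomass u hu φu hφu
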